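/- Let P be an induced-hereditary graph property that is not the class of all graphs, write d := dec(P), and let G be a P-strict graph with dec_P(G) = d having a unique P-decomposition (V₁,…,V_d) with d parts. Suppose G is an induced subgraph of a graph H (on a vertex set containing V(G)) with H ∈ P. Then H is P-strict, dec_P(H) = d, and for every P-decomposition (W₁,…,W_d) of H with d parts, the Wᵢ can be relabelled so that Wᵢ ∩ V(G) = Vᵢ for all i. -/

import Mathlib

/-!  Common framework: finite simple graphs on finite subsets of `ℕ`,
graph properties, `(P₁,…,Pₙ)`-partitions, products of properties,
`P`-decompositions, strict graphs, decomposability numbers, generating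
sets, *-joins of copies, and the respecting notions from the paper. -/

/-- A finite simple graph on a finite vertex set of natural numbers. -/
structure SGraph where
  verts : Finset ℕ
  Adj : ℕ → ℕ → Prop
  symm : ∀ a b, Adj a b → Adj b a
  loopless : ∀ a, ¬Adj a a
  mem_of_adj : ∀ a b, Adj a b → a ∈ verts ∧ b ∈ verts

/-- The null graph `K₀` (no vertices). -/
def nullGraph : SGraph where
  verts := ∅
  Adj _ _ := False
  symm _ _ h := h.elim
  loopless _ h := h
  mem_of_adj _ _ h := h.elim

namespace SGraph

/-- The subgraph of `G` induced by the vertex set `U`. -/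
def induce (G : SGraph) (U : Finset ℕ) : SGraph where
  verts := G.verts ∩ U
  Adj a b := G.Adj a b ∧ a ∈ U ∧ b ∈ U
  symm a b h := ⟨G.symm a b h.1, h.2.2, h.2.1⟩
  loopless a h := G.loopless a h.1
  mem_of_adj a b h := ⟨Finset.mem_inter.2 ⟨(G.mem_of_adj a b h.1).1, h.2.1⟩,
    Finset.mem_inter.2 ⟨(G.mem_of_adj a b h.1).2, h.2.2⟩⟩

/-- `φ` is an isomorphism from `G` onto `H`. -/
def IsoVia (G H : SGraph) (φ : ℕ → ℕ) : Prop :=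
  Set.BijOn φ (G.verts : Set ℕ) (H.verts : Set ℕ) ∧
    ∀ a ∈ G.verts, ∀ b ∈ G.verts, (G.Adj a b ↔ H.Adj (φ a) (φ b))

/-- `G` and `H` are isomorphic. -/
def Iso (G H : SGraph) : Prop := ∃ φ, G.IsoVia H φ

/-- `H ≤ G` : `H` is isomorphic to an induced subgraph of `G`. -/
def Le (H G : SGraph) : Prop := ∃ U ⊆ G.verts, H.Iso (G.induce U)

end SGraph

/-- `K` is the disjoint union of the family `C` of graphs. -/
def IsDisjUnion {k : ℕ} (K : SGraph) (C : Fin k → SGraph) : Prop :=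
  (∀ i j, i ≠ j → Disjoint (C i).verts (C j).verts) ∧
  K.verts = Finset.univ.biUnion (fun j => (C j).verts) ∧
  ∀ a b, K.Adj a b ↔ ∃ j, (C j).Adj a b

/-- `kG₀` : the set of graphs that are disjoint unions of `k` copies of `G₀`. -/
def kCopies (k : ℕ) (G₀ : SGraph) : Set SGraph :=
  {K | ∃ C : Fin k → SGraph, (∀ j, (C j).Iso G₀) ∧ IsDisjUnion K C}

/-- The *-join `G₁ * ⋯ * Gₙ` of a family of graphs (with pairwise disjoint
vertex sets): all graphs on the union of the vertex sets inducing each `Gᵢ`,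
so that only edges joining distinct `Gᵢ`'s may be added. -/
def StarJoin {n : ℕ} (Gs : Fin n → SGraph) : Set SGraph :=
  {H | H.verts = Finset.univ.biUnion (fun i => (Gs i).verts) ∧
    ∀ i, ∀ a ∈ (Gs i).verts, ∀ b ∈ (Gs i).verts, (H.Adj a b ↔ (Gs i).Adj a b)}

/-- `G * K₁` : the graphs obtained from `G` by adding one new vertex joined
arbitrarily to `G`. -/
def joinOne (G : SGraph) : Set SGraph :=
  {H | ∃ v, v ∉ G.verts ∧ H.verts = insert v G.verts ∧
    ∀ a ∈ G.verts, ∀ b ∈ G.verts, (H.Adj a b ↔ G.Adj a b)}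

/-- A graph property: a nonempty isomorphism-closed class of graphs (it
contains the null graph, which by convention belongs to every property, and
some graph with at least one vertex). -/
def IsProperty (P : Set SGraph) : Prop :=
  nullGraph ∈ P ∧ (∃ G ∈ P, G.verts.Nonempty) ∧
    ∀ G H, SGraph.Iso G H → G ∈ P → H ∈ P

/-- `P` is induced-hereditary. -/
def IndHer (P : Set SGraph) : Prop := ∀ G H, G ∈ P → SGraph.Le H G → H ∈ P

/-- `P` is additive: closed under disjoint unions. -/
def Additive' (P : Set SGraph) : Prop :=
  ∀ G H K : SGraph, G ∈ P → H ∈ P → IsDisjUnion K ![G, H] → K ∈ P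

/-- An additive induced-hereditary graph property. -/
def IsAIH (P : Set SGraph) : Prop := IsProperty P ∧ IndHer P ∧ Additive' P

/-- A `(P₁,…,Pₙ)`-partition of `G` (parts may be empty). -/
def IsPartitionInto {n : ℕ} (Ps : Fin n → Set SGraph) (G : SGraph)
    (V : Fin n → Finset ℕ) : Prop :=
  (∀ i j, i ≠ j → Disjoint (V i) (V j)) ∧
  Finset.univ.biUnion V = G.verts ∧
  ∀ i, G.induce (V i) ∈ Ps i

/-- The product `P₁ ∘ ⋯ ∘ Pₙ` of properties. -/
def ProdProp {n : ℕ} (Ps : Fin n → Set SGraph) : Set SGraph :=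
  {G | ∃ V : Fin n → Finset ℕ, IsPartitionInto Ps G V}

/-- A `P`-decomposition of `G` with parts `V` : the parts are nonempty and
partition `V(G)`, and for every `k ≥ 1` every graph in
`kG[V₁] * ⋯ * kG[Vₙ]` belongs to `P`. -/
def IsDecomp (P : Set SGraph) (G : SGraph) {n : ℕ} (V : Fin n → Finset ℕ) : Prop :=
  (∀ i, (V i).Nonempty) ∧
  (∀ i j, i ≠ j → Disjoint (V i) (V j)) ∧
  Finset.univ.biUnion V = G.verts ∧
  ∀ k : ℕ, 0 < k → ∀ A : Fin n → SGraph,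
    (∀ i, A i ∈ kCopies k (G.induce (V i))) →
    (∀ i j, i ≠ j → Disjoint (A i).verts (A j).verts) →
    ∀ H ∈ StarJoin A, H ∈ P

/-- `dec_P(G)` : the maximum number of parts of a `P`-decomposition of `G`
(`0` if there is none). -/
noncomputable def decP (P : Set SGraph) (G : SGraph) : ℕ :=
  sSup {n | ∃ V : Fin n → Finset ℕ, IsDecomp P G V}

/-- `G` is `P`-strict : `G ∈ P` but some graph in `G * K₁` is not in `P`. -/
def Strict (P : Set SGraph) (G : SGraph) : Prop :=
  G ∈ P ∧ ∃ H ∈ joinOne G, H ∉ P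

/-- `dec(P) = min { dec_P(G) : G ∈ S(P) }`. -/
noncomputable def decOf (P : Set SGraph) : ℕ :=
  sInf (decP P '' {G | Strict P G})

/-- `dec_P(𝒢) = min { dec_P(G) : G ∈ 𝒢 }`. -/
noncomputable def decSet (P 𝒢 : Set SGraph) : ℕ := sInf (decP P '' 𝒢)

/-- `⟨𝒢⟩` : the induced-hereditary property generated by `𝒢`. -/
def gen (𝒢 : Set SGraph) : Set SGraph := {G | ∃ H ∈ 𝒢, SGraph.Le G H}

/-- `𝒢` is a generating set for `P`. -/
def Generates (𝒢 P : Set SGraph) : Prop := gen 𝒢 = P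

/-- `G` is uniquely `P`-decomposable: it has exactly one `P`-decomposition
(as an unordered partition) with `dec_P(G)` parts. -/
def UniquelyDecomposable (P : Set SGraph) (G : SGraph) : Prop :=
  (∃ V : Fin (decP P G) → Finset ℕ, IsDecomp P G V) ∧
  ∀ V W : Fin (decP P G) → Finset ℕ, IsDecomp P G V → IsDecomp P G W →
    ∃ σ : Equiv.Perm (Fin (decP P G)), ∀ i, W i = V (σ i)

/-- Data exhibiting `Gstar` as a member of `s ⊛ G` : `s` pairwise disjoint
copies of `G` (given by isomorphisms) whose *-join contains `Gstar`. -/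
structure CopyJoin (G : SGraph) (s : ℕ) (Gstar : SGraph) where
  copies : Fin s → SGraph
  maps : Fin s → ℕ → ℕ
  iso : ∀ k, G.IsoVia (copies k) (maps k)
  disj : ∀ k l, k ≠ l → Disjoint (copies k).verts (copies l).verts
  mem : Gstar ∈ StarJoin copies

/-- `Gstar ∈ s ⊛ G` respects `d₀ = (U₁,…,Uₘ)` : every added edge between two
different copies of `G` meets (copies of) two different `Uⱼ`'s, i.e. there is
no edge between the copies of the same `Uⱼ` in two different copies of `G`. -/
def CopyJoin.RespectsJoin {G : SGraph} {s : ℕ} {Gstar : SGraph}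
    (cj : CopyJoin G s Gstar) {m : ℕ} (U : Fin m → Finset ℕ) : Prop :=
  ∀ k l : Fin s, k ≠ l → ∀ j : Fin m, ∀ a ∈ (U j).image (cj.maps k),
    ∀ b ∈ (U j).image (cj.maps l), ¬Gstar.Adj a b

/-- A partition `V` of `Gstar ∈ s ⊛ G` respects `d₀ = (U₁,…,Uₘ)` uniformly:
for each part `Vᵢ` there is a single `Uⱼ` such that in every copy `Gᵏ`,
`Vᵢ ∩ V(Gᵏ)` is contained in the copy of `Uⱼ`. -/
def CopyJoin.RespectsUniformly {G : SGraph} {s : ℕ} {Gstar : SGraph}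
    (cj : CopyJoin G s Gstar) {n m : ℕ}
    (V : Fin n → Finset ℕ) (U : Fin m → Finset ℕ) : Prop :=
  ∀ i, ∃ j, ∀ k, V i ∩ (cj.copies k).verts ⊆ (U j).image (cj.maps k)

/-- An irreducible additive induced-hereditary property: one that is not the
product of two additive induced-hereditary properties. -/
def IrredProp (P : Set SGraph) : Prop :=
  IsAIH P ∧ ¬∃ Q R : Set SGraph, IsAIH Q ∧ IsAIH R ∧ P = ProdProp ![Q, R]

/-!
Every `P`-decomposition `(W₁,…,Wₘ)` of `H` restricts to a `P`-decomposition `(U₁,…,Uₘ)` of `G`,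
`Uᵢ = Wᵢ ∩ V(G)`. The `Uᵢ` are nonempty: if `Wᵢ` missed `V(G)`, a vertex `w ∈ Wᵢ` could be
joined across the parts to `G` like the new vertex of a graph of `G * K₁` outside `P`, and the
decomposition (with `k = 1`) would put that graph into `P`. The restriction is a decomposition
because every graph of `kG[U₁] * ⋯ * kG[Uₘ]` is an induced subgraph of one of
`kH[W₁] * ⋯ * kH[Wₘ]`: extend each copy of `G[Uᵢ]` by fresh vertices to a copy of `H[Wᵢ]`.
As `G * K₁` embeds in `H * K₁`, `H` is `P`-strict, so `dec(P) ≤ dec_P(H) ≤ dec_P(G) = dec(P)`,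
and uniqueness for `G` identifies the restriction of any `dec(P)`-part decomposition of `H`
with `(V₁,…,V_d)`.
-/

lemma eq_of_mem_of_mem_of_disjoint {ι α : Type*} {s : ι → Finset α}
    (hs : ∀ i j, i ≠ j → Disjoint (s i) (s j)) {i j : ι} {a : α} (hi : a ∈ s i)
    (hj : a ∈ s j) : i = j :=
  by_contra fun hij => Finset.disjoint_left.1 (hs i j hij) hi hj

namespace SGraph

def ofRel (S : Finset ℕ) (R : ℕ → ℕ → Prop) : SGraph where
  verts := S
  Adj a b := a ∈ S ∧ b ∈ S ∧ a ≠ b ∧ (R a b ∨ R b a)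
  symm _ _ h := ⟨h.2.1, h.1, h.2.2.1.symm, h.2.2.2.symm⟩
  loopless _ h := h.2.2.1 rfl
  mem_of_adj _ _ h := ⟨h.1, h.2.1⟩

@[simp] lemma ofRel_verts (S : Finset ℕ) (R : ℕ → ℕ → Prop) : (ofRel S R).verts = S := rfl

@[simp] lemma ofRel_adj (S : Finset ℕ) (R : ℕ → ℕ → Prop) (a b : ℕ) :
    (ofRel S R).Adj a b ↔ a ∈ S ∧ b ∈ S ∧ a ≠ b ∧ (R a b ∨ R b a) := Iff.rfl

@[simp] lemma induce_verts (G : SGraph) (U : Finset ℕ) : (G.induce U).verts = G.verts ∩ U := rfl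

@[simp] lemma induce_adj (G : SGraph) (U : Finset ℕ) (a b : ℕ) :
    (G.induce U).Adj a b ↔ G.Adj a b ∧ a ∈ U ∧ b ∈ U := Iff.rfl

lemma ne_of_adj {G : SGraph} {a b : ℕ} (h : G.Adj a b) : a ≠ b :=
  fun hab => G.loopless a (hab ▸ h)

lemma adj_comm (G : SGraph) (a b : ℕ) : G.Adj a b ↔ G.Adj b a :=
  ⟨G.symm a b, G.symm b a⟩

def map (G : SGraph) (f : ℕ → ℕ) : SGraph :=
  ofRel (G.verts.image f) fun a b => ∃ u v, G.Adj u v ∧ f u = a ∧ f v = b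

def disjUnion {k : ℕ} (D : Fin k → SGraph) : SGraph :=
  ofRel (Finset.univ.biUnion fun j => (D j).verts) fun a b => ∃ j, (D j).Adj a b

/-- Induced subgraph on the same vertex labels (`SGraph.Le` is up to isomorphism). -/
def IsInducedSub (G H : SGraph) : Prop :=
  G.verts ⊆ H.verts ∧ ∀ a ∈ G.verts, ∀ b ∈ G.verts, (H.Adj a b ↔ G.Adj a b)

lemma Iso.refl (G : SGraph) : G.Iso G :=
  ⟨id, Set.bijOn_id _, fun _ _ _ _ => Iff.rfl⟩

lemma Iso.symm {G H : SGraph} (h : G.Iso H) : H.Iso G := by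
  obtain ⟨φ, hφ, hadj⟩ := h
  have hinv := hφ.invOn_invFunOn
  have hψ := hφ.symm hinv.symm
  refine ⟨Function.invFunOn φ G.verts, hψ, fun a ha b hb => ?_⟩
  have hma := hψ.mapsTo ha
  have hmb := hψ.mapsTo hb
  rw [hadj _ hma _ hmb, hinv.2 ha, hinv.2 hb]

lemma isoVia_map {G : SGraph} {f : ℕ → ℕ} (hf : Set.InjOn f G.verts) :
    G.IsoVia (G.map f) f := by
  refine ⟨by simpa [map] using hf.bijOn_image, fun a ha b hb => ?_⟩
  simp only [map, ofRel_adj, Finset.mem_image]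
  constructor
  · intro h
    exact ⟨⟨a, ha, rfl⟩, ⟨b, hb, rfl⟩, fun he => ne_of_adj h (hf ha hb he),
      Or.inl ⟨a, b, h, rfl, rfl⟩⟩
  · rintro ⟨-, -, -, ⟨u, v, h, hu, hv⟩ | ⟨u, v, h, hu, hv⟩⟩
    · obtain ⟨hu', hv'⟩ := G.mem_of_adj u v h
      rwa [← hf hu' ha hu, ← hf hv' hb hv]
    · obtain ⟨hu', hv'⟩ := G.mem_of_adj u v h
      rw [hf hu' hb hu, hf hv' ha hv] at h
      exact G.symm _ _ h

lemma isDisjUnion_disjUnion {k : ℕ} {D : Fin k → SGraph}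
    (hD : ∀ i j, i ≠ j → Disjoint (D i).verts (D j).verts) :
    IsDisjUnion (disjUnion D) D := by
  refine ⟨hD, rfl, fun a b => ?_⟩
  simp only [disjUnion, ofRel_adj, Finset.mem_biUnion, Finset.mem_univ, true_and]
  constructor
  · rintro ⟨-, -, -, h | ⟨j, h⟩⟩
    · exact h
    · exact ⟨j, (D j).symm _ _ h⟩
  · rintro ⟨j, h⟩
    exact ⟨⟨j, ((D j).mem_of_adj a b h).1⟩, ⟨j, ((D j).mem_of_adj a b h).2⟩, ne_of_adj h,
      Or.inl ⟨j, h⟩⟩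

namespace IsInducedSub

lemma le {G H : SGraph} (h : G.IsInducedSub H) : G.Le H := by
  have hverts : (H.induce G.verts).verts = G.verts := Finset.inter_eq_right.2 h.1
  refine ⟨G.verts, h.1, id, by rw [hverts]; exact Set.bijOn_id _, fun a ha b hb => ?_⟩
  simp [h.2 a ha b hb, ha, hb]

lemma induce_mono {G H : SGraph} (h : G.IsInducedSub H) {U U' : Finset ℕ} (hU : U ⊆ U') :
    (G.induce U).IsInducedSub (H.induce U') := by
  refine ⟨Finset.inter_subset_inter h.1 hU, fun a ha b hb => ?_⟩
  simp only [induce_verts, Finset.mem_inter] at ha hb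
  simp [h.2 a ha.1 b hb.1, ha.2, hb.2, hU ha.2, hU hb.2]

end IsInducedSub

lemma _root_.IsDisjUnion.isInducedSub {k : ℕ} {A B : SGraph} {C D : Fin k → SGraph}
    (hA : IsDisjUnion A C) (hB : IsDisjUnion B D) (hCD : ∀ j, (C j).IsInducedSub (D j))
    (hDA : ∀ j, ∀ a ∈ A.verts, a ∈ (D j).verts → a ∈ (C j).verts) : A.IsInducedSub B := by
  refine ⟨?_, fun a ha b hb => ?_⟩
  · rw [hA.2.1, hB.2.1]
    exact Finset.biUnion_mono fun j _ => (hCD j).1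
  · rw [hA.2.2, hB.2.2]
    constructor
    · rintro ⟨j, h⟩
      obtain ⟨haD, hbD⟩ := (D j).mem_of_adj a b h
      exact ⟨j, ((hCD j).2 a (hDA j a ha haD) b (hDA j b hb hbD)).1 h⟩
    · rintro ⟨j, h⟩
      obtain ⟨haC, hbC⟩ := (C j).mem_of_adj a b h
      exact ⟨j, ((hCD j).2 a haC b hbC).2 h⟩

lemma exists_iso_extension {G₀ H₀ C : SGraph} (hGH : G₀.IsInducedSub H₀) (hC : C.Iso G₀)
    {f : ℕ → ℕ} (hf : f.Injective) (hfC : ∀ x, f x ∉ C.verts) :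
    ∃ D : SGraph, D.Iso H₀ ∧ C.IsInducedSub D ∧
      (D.verts : Set ℕ) ⊆ C.verts ∪ Set.range f := by
  classical
  obtain ⟨τ, hτ, hτadj⟩ := hC.symm
  set ψ : ℕ → ℕ := fun u => if u ∈ G₀.verts then τ u else f u with hψ
  have hψG : ∀ u ∈ G₀.verts, ψ u = τ u := fun u hu => if_pos hu
  have hψinj : Set.InjOn ψ H₀.verts := by
    intro u _ u' _ he
    by_cases h : u ∈ G₀.verts <;> by_cases h' : u' ∈ G₀.verts <;>
      simp only [hψ, h, h', if_true, if_false] at he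
    · exact hτ.injOn h h' he
    · exact absurd (he ▸ hτ.mapsTo h) (hfC u')
    · exact absurd (he ▸ hτ.mapsTo h') (hfC u)
    · exact hf he
  have hψiso := isoVia_map hψinj
  refine ⟨H₀.map ψ, Iso.symm ⟨ψ, hψiso⟩, ⟨fun c hc => ?_, fun c hc c' hc' => ?_⟩, ?_⟩
  · obtain ⟨u, hu, rfl⟩ := hτ.surjOn hc
    exact Finset.mem_image.2 ⟨u, hGH.1 hu, hψG u hu⟩
  · obtain ⟨u, hu, rfl⟩ := hτ.surjOn hc
    obtain ⟨u', hu', rfl⟩ := hτ.surjOn hc'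
    calc (H₀.map ψ).Adj (τ u) (τ u') ↔ (H₀.map ψ).Adj (ψ u) (ψ u') := by
          rw [hψG u hu, hψG u' hu']
      _ ↔ H₀.Adj u u' := (hψiso.2 u (hGH.1 hu) u' (hGH.1 hu')).symm
      _ ↔ G₀.Adj u u' := hGH.2 u hu u' hu'
      _ ↔ C.Adj (τ u) (τ u') := hτadj u hu u' hu'
  · intro x hx
    obtain ⟨u, -, rfl⟩ := Finset.mem_image.1 hx
    by_cases h : u ∈ G₀.verts
    · exact Or.inl (by simpa [hψ, h] using hτ.mapsTo h)
    · exact Or.inr ⟨u, by simp [hψ, h]⟩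

lemma exists_kCopies_extension {G₀ H₀ A : SGraph} {k : ℕ} (hGH : G₀.IsInducedSub H₀)
    (hA : A ∈ kCopies k G₀) {f : ℕ → ℕ} (hf : f.Injective) (hfA : ∀ x, f x ∉ A.verts) :
    ∃ B ∈ kCopies k H₀, A.IsInducedSub B ∧ (B.verts : Set ℕ) ⊆ A.verts ∪ Set.range f := by
  obtain ⟨C, hCiso, hAC⟩ := hA
  have hCA : ∀ j, (C j).verts ⊆ A.verts := fun j =>
    hAC.2.1 ▸ Finset.subset_biUnion_of_mem (fun j => (C j).verts) (Finset.mem_univ j)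
  have hfj : ∀ j : Fin k, (f ∘ Nat.pair j).Injective := fun j =>
    hf.comp fun x y h => (Nat.pair_eq_pair.1 h).2
  choose D hDiso hCD hDsub using fun j =>
    exists_iso_extension hGH (hCiso j) (hfj j) fun x hx => hfA _ (hCA j hx)
  have hDA : ∀ j, ∀ a ∈ A.verts, a ∈ (D j).verts → a ∈ (C j).verts := by
    intro j a haA haD
    rcases hDsub j haD with h | ⟨x, rfl⟩
    · exact h
    · exact absurd haA (hfA _)
  have hDdisj : ∀ i j, i ≠ j → Disjoint (D i).verts (D j).verts := by
    intro i j hij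
    refine Finset.disjoint_left.2 fun a hai haj => ?_
    rcases hDsub i hai with hCi | ⟨x, rfl⟩
    · exact Finset.disjoint_left.1 (hAC.1 i j hij) hCi (hDA j a (hCA i hCi) haj)
    · rcases hDsub j haj with hCj | ⟨y, hy⟩
      · exact hfA _ (hCA j hCj)
      · exact hij (Fin.ext (Nat.pair_eq_pair.1 (hf hy)).1.symm)
  have hBD := isDisjUnion_disjUnion hDdisj
  refine ⟨disjUnion D, ⟨D, hDiso, hBD⟩, hAC.isInducedSub hBD hCD hDA, fun b hb => ?_⟩
  obtain ⟨j, -, hj⟩ := Finset.mem_biUnion.1 hb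
  rcases hDsub j hj with h | ⟨x, rfl⟩
  · exact Or.inl (hCA j h)
  · exact Or.inr ⟨_, rfl⟩

def crossJoin {n : ℕ} (B : Fin n → SGraph) (K : SGraph) : SGraph :=
  ofRel (Finset.univ.biUnion fun i => (B i).verts) fun a b =>
    (∃ i, (B i).Adj a b) ∨ (K.Adj a b ∧ ∀ i, a ∈ (B i).verts → b ∉ (B i).verts)

section crossJoin

variable {n : ℕ} {B : Fin n → SGraph}

lemma mem_crossJoin_verts (K : SGraph) {i : Fin n} {a : ℕ} (h : a ∈ (B i).verts) :
    a ∈ (crossJoin B K).verts :=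
  Finset.subset_biUnion_of_mem (fun i => (B i).verts) (Finset.mem_univ i) h

lemma crossJoin_mem_starJoin (K : SGraph) (hB : ∀ i j, i ≠ j → Disjoint (B i).verts (B j).verts) :
    crossJoin B K ∈ StarJoin B := by
  refine ⟨rfl, fun i a ha b hb => ?_⟩
  simp only [crossJoin, ofRel_adj]
  constructor
  · rintro ⟨-, -, -, (⟨j, h⟩ | ⟨-, h⟩) | (⟨j, h⟩ | ⟨-, h⟩)⟩
    · rwa [eq_of_mem_of_mem_of_disjoint hB ha ((B j).mem_of_adj a b h).1]
    · exact absurd hb (h i ha)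
    · rw [eq_of_mem_of_mem_of_disjoint hB ha ((B j).mem_of_adj b a h).2]
      exact (B j).symm _ _ h
    · exact absurd ha (h i hb)
  · intro h
    exact ⟨mem_crossJoin_verts K ha, mem_crossJoin_verts K hb, ne_of_adj h,
      Or.inl (Or.inl ⟨i, h⟩)⟩

lemma isInducedSub_crossJoin {A : Fin n → SGraph} (hAB : ∀ i, (A i).IsInducedSub (B i))
    (hB : ∀ i j, i ≠ j → Disjoint (B i).verts (B j).verts) {K : SGraph}
    (hK : K ∈ StarJoin A) : K.IsInducedSub (crossJoin B K) := by
  have hKA : ∀ a ∈ K.verts, ∃ i, a ∈ (A i).verts := fun a ha => by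
    rw [hK.1] at ha
    simpa using ha
  refine ⟨fun a ha => ?_, fun a ha b hb => ?_⟩
  · obtain ⟨i, hai⟩ := hKA a ha
    exact mem_crossJoin_verts K ((hAB i).1 hai)
  obtain ⟨i, hai⟩ := hKA a ha
  obtain ⟨j, hbj⟩ := hKA b hb
  by_cases hij : i = j
  · subst hij
    rw [(crossJoin_mem_starJoin K hB).2 i a ((hAB i).1 hai) b ((hAB i).1 hbj),
      (hAB i).2 a hai b hbj, hK.2 i a hai b hbj]
  have hsep : ∀ l, a ∈ (B l).verts → b ∉ (B l).verts := fun l hal hbl =>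
    hij ((eq_of_mem_of_mem_of_disjoint hB ((hAB i).1 hai) hal).trans
      (eq_of_mem_of_mem_of_disjoint hB ((hAB j).1 hbj) hbl).symm)
  simp only [crossJoin, ofRel_adj]
  constructor
  · rintro ⟨-, -, -, (⟨l, h⟩ | ⟨h, -⟩) | (⟨l, h⟩ | ⟨h, -⟩)⟩
    · exact (hsep l ((B l).mem_of_adj a b h).1 ((B l).mem_of_adj a b h).2).elim
    · exact h
    · exact (hsep l ((B l).mem_of_adj b a h).2 ((B l).mem_of_adj b a h).1).elim
    · exact K.symm _ _ h
  · intro h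
    exact ⟨mem_crossJoin_verts K ((hAB i).1 hai), mem_crossJoin_verts K ((hAB j).1 hbj),
      ne_of_adj h, Or.inl (Or.inr ⟨h, hsep⟩)⟩

end crossJoin

lemma mem_kCopies_one (K : SGraph) : K ∈ kCopies 1 K :=
  ⟨fun _ => K, fun _ => Iso.refl K, fun i j hij => absurd (Subsingleton.elim i j) hij,
    by simp, fun _ _ => ⟨fun h => ⟨0, h⟩, fun ⟨_, h⟩ => h⟩⟩

lemma le_of_vertex_extension {G F K : SGraph} {v w : ℕ} (hv : v ∉ G.verts)
    (hFv : F.verts = insert v G.verts)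
    (hFG : ∀ a ∈ G.verts, ∀ b ∈ G.verts, (F.Adj a b ↔ G.Adj a b))
    (hGK : G.IsInducedSub K) (hwK : w ∈ K.verts) (hw : w ∉ G.verts)
    (hKw : ∀ b ∈ G.verts, (K.Adj w b ↔ F.Adj v b)) : F.Le K := by
  classical
  set σ := Equiv.swap v w
  have hσG : ∀ x ∈ G.verts, σ x = x := fun x hx =>
    Equiv.swap_apply_of_ne_of_ne (ne_of_mem_of_not_mem hx hv) (ne_of_mem_of_not_mem hx hw)
  have hU : insert w G.verts ⊆ K.verts := Finset.insert_subset hwK hGK.1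
  have hσU : σ '' (insert v G.verts : Finset ℕ) = (insert w G.verts : Finset ℕ) := by
    rw [Finset.coe_insert, Set.image_insert_eq, Equiv.swap_apply_left,
      Set.EqOn.image_eq_self fun x hx => hσG x hx, Finset.coe_insert]
  refine ⟨insert w G.verts, hU, σ, ?_, fun a ha b hb => ?_⟩
  · rw [induce_verts, Finset.inter_eq_right.2 hU, hFv, ← hσU]
    exact σ.injective.injOn.bijOn_image
  rw [hFv] at ha hb
  rw [induce_adj]
  rcases Finset.mem_insert.1 ha with rfl | haG <;> rcases Finset.mem_insert.1 hb with rfl | hbG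
  · simp [F.loopless, K.loopless]
  · rw [Equiv.swap_apply_left, hσG b hbG, hKw b hbG]
    simp [hbG]
  · rw [Equiv.swap_apply_left, hσG a haG, K.adj_comm, hKw a haG, F.adj_comm]
    simp [haG]
  · rw [hσG a haG, hσG b hbG, hFG a haG b hbG, hGK.2 a haG b hbG]
    simp [haG, hbG]

end SGraph

open SGraph

lemma Strict.of_isInducedSub {P : Set SGraph} (hher : IndHer P) {G H : SGraph}
    (hG : Strict P G) (hGH : G.IsInducedSub H) (hH : H ∈ P) : Strict P H := by
  obtain ⟨-, F, ⟨v, hv, hFv, hFG⟩, hFP⟩ := hG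
  obtain ⟨w, hw⟩ := Infinite.exists_notMem_finset H.verts
  set K := ofRel (insert w H.verts) fun a b => H.Adj a b ∨ (a = w ∧ F.Adj v b)
  have hKH : ∀ a ∈ H.verts, ∀ b ∈ H.verts, (K.Adj a b ↔ H.Adj a b) := by
    intro a ha b hb
    have haw : a ≠ w := ne_of_mem_of_not_mem ha hw
    have hbw : b ≠ w := ne_of_mem_of_not_mem hb hw
    simp only [K, ofRel_adj, haw, hbw, false_and, or_false, Finset.mem_insert, ha, hb, or_true,
      true_and]
    exact ⟨fun ⟨_, h⟩ => h.elim id (H.symm _ _), fun h => ⟨ne_of_adj h, Or.inl h⟩⟩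
  refine ⟨hH, K, ⟨w, hw, rfl, hKH⟩, fun hK => hFP (hher K F hK ?_)⟩
  have hGK : G.IsInducedSub K := ⟨hGH.1.trans (Finset.subset_insert _ _), fun a ha b hb =>
    (hKH a (hGH.1 ha) b (hGH.1 hb)).trans (hGH.2 a ha b hb)⟩
  refine le_of_vertex_extension hv hFv hFG hGK (Finset.mem_insert_self _ _)
    (fun h => hw (hGH.1 h)) fun b hb => ?_
  have hbw : b ≠ w := ne_of_mem_of_not_mem (hGH.1 hb) hw
  simp only [K, ofRel_adj]
  constructor
  · rintro ⟨-, -, -, (h | ⟨-, h⟩) | (h | ⟨h, -⟩)⟩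
    · exact absurd (H.mem_of_adj _ _ h).1 hw
    · exact h
    · exact absurd (H.mem_of_adj _ _ h).2 hw
    · exact absurd h hbw
  · intro h
    exact ⟨Finset.mem_insert_self _ _, Finset.mem_insert_of_mem (hGH.1 hb), hbw.symm,
      Or.inl (Or.inr ⟨trivial, h⟩)⟩

namespace IsDecomp

variable {P : Set SGraph} {H : SGraph} {n : ℕ} {W : Fin n → Finset ℕ}

lemma subset_verts (hW : IsDecomp P H W) (i : Fin n) : W i ⊆ H.verts :=
  hW.2.2.1 ▸ Finset.subset_biUnion_of_mem W (Finset.mem_univ i)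

lemma card_le (hW : IsDecomp P H W) : n ≤ H.verts.card := by
  choose a ha using hW.1
  have hinj : Set.InjOn a (Finset.univ : Finset (Fin n)) := fun i _ j _ hij =>
    eq_of_mem_of_mem_of_disjoint hW.2.1 (ha i) (hij ▸ ha j)
  simpa using Finset.card_le_card_of_injOn a (fun i _ => hW.subset_verts i (ha i)) hinj

lemma mem_of_adj_iff_on_parts (hW : IsDecomp P H W) {K : SGraph} (hK : K.verts = H.verts)
    (hKW : ∀ i, ∀ a ∈ W i, ∀ b ∈ W i, (K.Adj a b ↔ H.Adj a b)) : K ∈ P := by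
  refine hW.2.2.2 1 one_pos (fun i => H.induce (W i)) (fun i => mem_kCopies_one _)
    (fun i j hij => (hW.2.1 i j hij).mono Finset.inter_subset_right Finset.inter_subset_right)
    K ⟨?_, fun i a ha b hb => ?_⟩
  · simp only [hK, induce_verts]
    rw [← Finset.inter_biUnion, hW.2.2.1, Finset.inter_self]
  · simp only [induce_verts, Finset.mem_inter] at ha hb
    simp [hKW i a ha.2 b hb.2, ha.2, hb.2]

lemma exists_mem_with_neighbors (hW : IsDecomp P H W) {G : SGraph} (hGH : G.IsInducedSub H)
    {i : Fin n} (hWG : Disjoint (W i) G.verts) {w : ℕ} (hw : w ∈ W i) (E : ℕ → Prop) :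
    ∃ K ∈ P, G.IsInducedSub K ∧ w ∈ K.verts ∧ ∀ b ∈ G.verts, (K.Adj w b ↔ E b) := by
  have hwG : w ∉ G.verts := Finset.disjoint_left.1 hWG hw
  set same : ℕ → ℕ → Prop := fun a b => ∃ j, a ∈ W j ∧ b ∈ W j
  set K := ofRel H.verts fun a b =>
    (same a b ∧ H.Adj a b) ∨ (¬same a b ∧ (G.Adj a b ∨ (a = w ∧ E b)))
  have hKP : K ∈ P := by
    refine hW.mem_of_adj_iff_on_parts rfl fun j a ha b hb => ?_
    have hab : same a b := ⟨j, ha, hb⟩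
    have hba : same b a := ⟨j, hb, ha⟩
    simp only [K, ofRel_adj, hab, hba, hW.subset_verts j ha, hW.subset_verts j hb,
      not_true_eq_false, false_and, or_false, true_and]
    exact ⟨fun ⟨_, h⟩ => h.elim id (H.symm _ _), fun h => ⟨ne_of_adj h, Or.inl h⟩⟩
  have hGK : G.IsInducedSub K := by
    refine ⟨hGH.1, fun a ha b hb => ?_⟩
    have haw : a ≠ w := ne_of_mem_of_not_mem ha hwG
    have hbw : b ≠ w := ne_of_mem_of_not_mem hb hwG
    simp only [K, ofRel_adj, haw, hbw, false_and, or_false, hGH.1 ha, hGH.1 hb, true_and,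
      ← hGH.2 a ha b hb, H.adj_comm b a, G.adj_comm b a]
    by_cases hab : same a b <;> by_cases hba : same b a <;> simp [hab, hba] <;> exact ne_of_adj
  refine ⟨K, hKP, hGK, hW.subset_verts i hw, fun b hb => ?_⟩
  have hsep : ∀ j, w ∈ W j → b ∉ W j := fun j hwj hbj =>
    Finset.disjoint_left.1 hWG (eq_of_mem_of_mem_of_disjoint hW.2.1 hwj hw ▸ hbj) hb
  have hwb : ¬same w b := fun ⟨j, hwj, hbj⟩ => hsep j hwj hbj
  have hbw : ¬same b w := fun ⟨j, hbj, hwj⟩ => hsep j hwj hbj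
  simp only [K, ofRel_adj, hwb, hbw, not_false_eq_true, true_and, false_and, false_or]
  constructor
  · rintro ⟨-, -, -, (h | h) | (h | ⟨h, -⟩)⟩
    · exact absurd (G.mem_of_adj _ _ h).1 hwG
    · exact h
    · exact absurd (G.mem_of_adj _ _ h).2 hwG
    · exact absurd h (ne_of_mem_of_not_mem hb hwG)
  · intro h
    exact ⟨hW.subset_verts i hw, hGH.1 hb, (ne_of_mem_of_not_mem hb hwG).symm,
      Or.inl (Or.inr h)⟩

lemma inter_nonempty_of_strict (hher : IndHer P) (hW : IsDecomp P H W) {G : SGraph}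
    (hG : Strict P G) (hGH : G.IsInducedSub H) (i : Fin n) : (W i ∩ G.verts).Nonempty := by
  obtain ⟨-, F, ⟨v, hv, hFv, hFG⟩, hFP⟩ := hG
  by_contra hempty
  obtain ⟨w, hw⟩ := hW.1 i
  have hWG : Disjoint (W i) G.verts :=
    Finset.disjoint_iff_inter_eq_empty.2 (Finset.not_nonempty_iff_eq_empty.1 hempty)
  obtain ⟨K, hKP, hGK, hwK, hKw⟩ := hW.exists_mem_with_neighbors hGH hWG hw (F.Adj v)
  exact hFP (hher K F hKP
    (le_of_vertex_extension hv hFv hFG hGK hwK (Finset.disjoint_left.1 hWG hw) hKw))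

lemma restrict (hher : IndHer P) (hW : IsDecomp P H W) {G : SGraph} (hGH : G.IsInducedSub H)
    (hmeet : ∀ i, (W i ∩ G.verts).Nonempty) : IsDecomp P G fun i => W i ∩ G.verts := by
  refine ⟨hmeet, fun i j hij =>
    (hW.2.1 i j hij).mono Finset.inter_subset_left Finset.inter_subset_left, ?_, ?_⟩
  · rw [← Finset.biUnion_inter, hW.2.2.1, Finset.inter_eq_right.2 hGH.1]
  intro k hk A hA hAdisj K hK
  have hAK : ∀ i, (A i).verts ⊆ K.verts := fun i =>
    hK.1 ▸ Finset.subset_biUnion_of_mem (fun i => (A i).verts) (Finset.mem_univ i)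
  obtain ⟨N, hN⟩ := Finset.exists_nat_subset_range K.verts
  -- fresh vertices: above `K.verts`, and different for different parts
  set f : Fin n → ℕ → ℕ := fun i x => N + Nat.pair i x
  have hfK : ∀ i x, f i x ∉ K.verts := fun i x hx => by
    have := Finset.mem_range.1 (hN hx)
    simp only [f] at this
    omega
  have hf : ∀ {i j x y}, f i x = f j y → i = j := fun h =>
    Fin.ext (Nat.pair_eq_pair.1 (Nat.add_left_cancel h)).1
  choose B hB hAB hBsub using fun i =>
    exists_kCopies_extension (hGH.induce_mono (Finset.inter_subset_left (s₂ := G.verts)))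
      (hA i) (fun x y h => (Nat.pair_eq_pair.1 (Nat.add_left_cancel h)).2)
      fun x hx => hfK i x (hAK i hx)
  have hBdisj : ∀ i j, i ≠ j → Disjoint (B i).verts (B j).verts := by
    intro i j hij
    refine Finset.disjoint_left.2 fun a hai haj => ?_
    rcases hBsub i hai with hAi | ⟨x, rfl⟩
    · rcases hBsub j haj with hAj | ⟨y, rfl⟩
      · exact Finset.disjoint_left.1 (hAdisj i j hij) hAi hAj
      · exact hfK j y (hAK i hAi)
    · rcases hBsub j haj with hAj | ⟨y, hy⟩
      · exact hfK i x (hAK j hAj)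
      · exact hij (hf hy).symm
  exact hher _ K (hW.2.2.2 k hk B hB hBdisj _ (crossJoin_mem_starJoin K hBdisj))
    (isInducedSub_crossJoin hAB hBdisj hK).le

end IsDecomp

lemma decP_le_decP {P : Set SGraph} {G H : SGraph}
    (h : ∀ m (W : Fin m → Finset ℕ), IsDecomp P H W → ∃ V : Fin m → Finset ℕ, IsDecomp P G V) :
    decP P H ≤ decP P G :=
  csSup_le' fun m ⟨W, hW⟩ =>
    le_csSup ⟨G.verts.card, fun _ ⟨_, hV⟩ => hV.card_le⟩ (h m W hW)

lemma decOf_le_decP {P : Set SGraph} {H : SGraph} (h : Strict P H) : decOf P ≤ decP P H :=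
  Nat.sInf_le ⟨H, h, rfl⟩

theorem statement7_general (P : Set SGraph) (hher : IndHer P)
    (G : SGraph) (hGs : Strict P G) (hdec : decP P G = decOf P)
    (V : Fin (decOf P) → Finset ℕ)
    (huniq : ∀ W : Fin (decOf P) → Finset ℕ, IsDecomp P G W →
      ∃ σ : Equiv.Perm (Fin (decOf P)), ∀ i, W i = V (σ i))
    (H : SGraph) (hHP : H ∈ P) (hsub : G.verts ⊆ H.verts)
    (hind : ∀ a ∈ G.verts, ∀ b ∈ G.verts, (H.Adj a b ↔ G.Adj a b)) :
    Strict P H ∧ decP P H = decOf P ∧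
    ∀ W : Fin (decOf P) → Finset ℕ, IsDecomp P H W →
      ∃ σ : Equiv.Perm (Fin (decOf P)), ∀ i, W (σ i) ∩ G.verts = V i := by
  have hGH : G.IsInducedSub H := ⟨hsub, hind⟩
  have hrestrict : ∀ {m} (W : Fin m → Finset ℕ), IsDecomp P H W →
      IsDecomp P G fun i => W i ∩ G.verts := fun W hW =>
    hW.restrict hher hGH (hW.inter_nonempty_of_strict hher hGs hGH)
  have hHs : Strict P H := hGs.of_isInducedSub hher hGH hHP
  refine ⟨hHs, le_antisymm ?_ (decOf_le_decP hHs), fun W hW => ?_⟩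
  · exact hdec ▸ decP_le_decP fun _ W hW => ⟨_, hrestrict W hW⟩
  · obtain ⟨σ, hσ⟩ := huniq _ (hrestrict W hW)
    exact ⟨σ.symm, fun i => by simpa using hσ (σ.symm i)⟩

theorem statement7 (P : Set SGraph) (hP : IsProperty P) (hher : IndHer P)
    (hne : P ≠ Set.univ)
    (G : SGraph) (hGs : Strict P G) (hdec : decP P G = decOf P)
    (V : Fin (decOf P) → Finset ℕ) (hV : IsDecomp P G V)
    (huniq : ∀ W : Fin (decOf P) → Finset ℕ, IsDecomp P G W →
      ∃ σ : Equiv.Perm (Fin (decOf P)), ∀ i, W i = V (σ i))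
    (H : SGraph) (hHP : H ∈ P) (hsub : G.verts ⊆ H.verts)
    (hind : ∀ a ∈ G.verts, ∀ b ∈ G.verts, (H.Adj a b ↔ G.Adj a b)) :
    Strict P H ∧ decP P H = decOf P ∧
    ∀ W : Fin (decOf P) → Finset ℕ, IsDecomp P H W →
      ∃ σ : Equiv.Perm (Fin (decOf P)), ∀ i, W (σ i) ∩ G.verts = V i :=
  statement7_general P hher G hGs hdec V huniq H hHP hsub hind
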